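/- In the Bradley-Terry model with all strengths π_i > 0, if π_i > π_j then the round-robin winning percentage satisfies R_i > R_j, where R_i = (1/(t-1)) Σ_{k≠i} π_i/(π_i+π_k). -/

import Mathlib

/-!
Removing the head-to-head game, team `i` and team `j` face the same opponents, and against each of
them the stronger team wins with higher probability, since `x ↦ x / (x + c)` is increasing for
`c > 0`. The head-to-head term itself is `πᵢ / (πᵢ + πⱼ) > πⱼ / (πⱼ + πᵢ)`.
-/

open Finset

theorem div_add_lt_div_add_of_lt {K : Type*} [Field K] [LinearOrder K] [IsStrictOrderedRing K]
    {a b c : K} (hb : 0 < b) (hc : 0 < c) (hba : b < a) : b / (b + c) < a / (a + c) := by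
  rw [div_lt_div_iff₀ (by positivity) (by linarith)]
  nlinarith

theorem sum_erase_div_add_lt_of_lt {T : Type*} [DecidableEq T] (s : Finset T) (π : T → ℝ)
    (hπ : ∀ k, 0 < π k) {i j : T} (hi : i ∈ s) (hj : j ∈ s) (hji : π j < π i) :
    ∑ k ∈ s.erase j, π j / (π j + π k) < ∑ k ∈ s.erase i, π i / (π i + π k) := by
  have hij : i ≠ j := fun h => (h ▸ hji).false
  rw [← add_sum_erase _ _ (mem_erase.2 ⟨hij, hi⟩), ← add_sum_erase _ _ (mem_erase.2 ⟨hij.symm, hj⟩),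
    erase_right_comm]
  have head_to_head : π j / (π j + π i) < π i / (π i + π j) := by
    rw [add_comm]
    exact div_lt_div_of_pos_right hji (add_pos (hπ i) (hπ j))
  exact add_lt_add_of_lt_of_le head_to_head
    (sum_le_sum fun k _ => (div_add_lt_div_add_of_lt (hπ j) (hπ k) hji).le)

theorem bt_rrwp_order_general {T : Type*} [Fintype T] [DecidableEq T]
    (π : T → ℝ) (hπ : ∀ i : T, 0 < π i)
    (i j : T) (hstr : π i > π j) :
    (1 / (Fintype.card T - 1 : ℝ)) * ∑ k ∈ Finset.univ.erase i, π i / (π i + π k) >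
    (1 / (Fintype.card T - 1 : ℝ)) * ∑ k ∈ Finset.univ.erase j, π j / (π j + π k) := by
  have : Nontrivial T := nontrivial_of_ne i j fun h => (h ▸ hstr).false
  have hcard : (1 : ℝ) < Fintype.card T := by exact_mod_cast Fintype.one_lt_card
  exact mul_lt_mul_of_pos_left
    (sum_erase_div_add_lt_of_lt univ π hπ (mem_univ i) (mem_univ j) hstr)
    (one_div_pos.2 (sub_pos.2 hcard))

theorem bt_rrwp_order {T : Type*} [Fintype T] [DecidableEq T]
    (ht : 2 ≤ Fintype.card T)
    (π : T → ℝ) (hπ : ∀ i : T, 0 < π i)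
    (i j : T) (hij : i ≠ j) (hstr : π i > π j) :
    (1 / (Fintype.card T - 1 : ℝ)) * ∑ k ∈ Finset.univ.erase i, π i / (π i + π k) >
    (1 / (Fintype.card T - 1 : ℝ)) * ∑ k ∈ Finset.univ.erase j, π j / (π j + π k) :=
  bt_rrwp_order_general π hπ i j hstr
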